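/- arXiv:2104.07898 — 2 statements merged into one kernel-verified Lean document; each statement's English description precedes it below -/
import Mathlib

section
/- Let T be an arborescence rooted at s, (S, V\S) a cut with s ∈ S that 1-respects T, and suppose a set W of vertices, all belonging to S, is removed from T, splitting T into a collection of subtrees. Then V\S is entirely contained in one of the resulting subtrees (connected components of T minus W). -/
/-- Connectivity in the tree `T` (undirected edges `{parent v, v}`) after the
vertex set `W` has been removed: both endpoints of every step avoid `W`. -/
def ConnAvoiding {V : Type*} (parent : V → V) (W : Set V) : V → V → Prop :=
  Relation.ReflTransGen (fun a b => (parent a = b ∨ parent b = a) ∧ a ∉ W ∧ b ∉ W)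

namespace ConnAvoiding

variable {V : Type*} {parent : V → V} {W : Set V}

theorem symm {x y : V} (h : ConnAvoiding parent W x y) : ConnAvoiding parent W y x :=
  Relation.ReflTransGen.mono (fun _ _ ⟨hadj, ha, hb⟩ => ⟨hadj.symm, hb, ha⟩) _ _
    (Relation.ReflTransGen.swap _ _ h)

/-- Climbing from `x` towards the root stays outside `S ⊇ W` until it crosses the cut, and the
only vertex at which it can cross is `v`. -/
theorem of_iterate_mem {S : Set V} (hW : W ⊆ S) {v : V}
    (hexit : ∀ u, u ∉ S → parent u ∈ S → u = v) :
    ∀ (k : ℕ) (x : V), parent^[k] x ∈ S → x ∉ S → ConnAvoiding parent W x v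
  | 0, _, hk, hx => absurd hk hx
  | k + 1, x, hk, hx => by
    by_cases hpx : parent x ∈ S
    · exact hexit x hx hpx ▸ .refl
    · exact .head ⟨.inl rfl, fun h => hx (hW h), fun h => hpx (hW h)⟩
        (of_iterate_mem hW hexit k (parent x) hk hpx)

end ConnAvoiding

theorem complement_in_one_component_general
    {V : Type*} (parent : V → V) (s : V)
    (harb : ∀ v : V, ∃ k : ℕ, parent^[k] v = s)
    (S : Set V) (hs : s ∈ S)
    (hone : ∃! v : V, v ≠ s ∧ parent v ∈ S ∧ v ∉ S)
    (W : Set V) (hW : W ⊆ S) :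
    ∀ x y : V, x ∉ S → y ∉ S → ConnAvoiding parent W x y := by
  obtain ⟨v, -, hv_unique⟩ := hone
  have hexit : ∀ u, u ∉ S → parent u ∈ S → u = v := fun u hu hpu =>
    hv_unique u ⟨fun h => hu (h ▸ hs), hpu, hu⟩
  have hreach : ∀ x, x ∉ S → ConnAvoiding parent W x v := fun x hx => by
    obtain ⟨k, hk⟩ := harb x
    exact ConnAvoiding.of_iterate_mem hW hexit k x (hk ▸ hs) hx
  intro x y hx hy
  exact (hreach x hx).trans (hreach y hy).symm

/-- Let `T` be an arborescence rooted at `s` (given by `parent`),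
`(S, V\S)` a cut with `s ∈ S` that 1-respects `T`, and let `W ⊆ S` be a set of
removed vertices. Then `V\S` is entirely contained in one connected component
of the forest `T − W`: any two vertices outside `S` are connected in `T − W`. -/
theorem complement_in_one_component
    {V : Type*} [Fintype V] (parent : V → V) (s : V)
    (harb : ∀ v : V, ∃ k : ℕ, parent^[k] v = s)
    (S : Set V) (hs : s ∈ S)
    (hone : ∃! v : V, v ≠ s ∧ parent v ∈ S ∧ v ∉ S)
    (W : Set V) (hW : W ⊆ S) :
    ∀ x y : V, x ∉ S → y ∉ S → ConnAvoiding parent W x y :=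
  complement_in_one_component_general parent s harb S hs hone W hW
end

section
/- Let x be a probability distribution over arborescences A_1,…,A_N rooted at s (x ≥ 0, ∑x_i = 1), with max load γ = max_j ∑_i x_i·1[j ∈ A_i]/w(j) over edges j. If S is a cut with s on the source side of weight δ(S), then the expected number of edges of a random arborescence (drawn with probabilities x_i) crossing the cut (S, V\S) is at most γ·δ(S), and is always at least 1. -/
open Finset

/-
Every `s`-arborescence crosses the cut: following parent pointers from a vertex outside `S`
eventually reaches `s ∈ S`, and the last step from outside to inside is a tree edge leaving `S`.
Averaging gives the lower bound. For the upper bound, exchange the order of summation: the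
expected number of crossing edges is the sum over the cut edges `e` of the probability that
`e` is used, and the load bound makes that probability at most `γ * w e`.
-/

theorem exists_notMem_and_apply_mem_of_iterate_mem {α : Type*} {f : α → α} {S : Set α} :
    ∀ {k : ℕ} {v : α}, v ∉ S → f^[k] v ∈ S → ∃ u ∉ S, f u ∈ S
  | 0, _, hv, hk => absurd hk hv
  | k + 1, v, hv, hk => by
    by_cases hfv : f v ∈ S
    · exact ⟨v, hv, hfv⟩
    · exact exists_notMem_and_apply_mem_of_iterate_mem hfv hk

theorem filter_crossing_nonempty_of_parent {V : Type*} [DecidableEq V] {A : Finset (V × V)}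
    {s : V} {parent : V → V} (hpar : ∀ v, v ≠ s → (parent v, v) ∈ A) {S : Finset V}
    (hsS : s ∈ S) {v : V} (hv : v ∉ S) (hroot : ∃ k, parent^[k] v = s) :
    (A.filter fun e => e.1 ∈ S ∧ e.2 ∉ S).Nonempty := by
  obtain ⟨k, hk⟩ := hroot
  obtain ⟨u, huS, hpu⟩ :=
    exists_notMem_and_apply_mem_of_iterate_mem (S := (S : Set V)) hv (hk ▸ hsS)
  have hus : u ≠ s := fun h => huS (h ▸ hsS)
  exact ⟨(parent u, u), mem_filter.2 ⟨hpar u hus, hpu, huS⟩⟩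

theorem sum_mul_card_filter_eq_sum_filter_sum {ι α R : Type*} [Fintype ι] [DecidableEq α]
    [CommSemiring R] (E : Finset α) (A : ι → Finset α) (hAE : ∀ i, A i ⊆ E) (p : α → Prop)
    [DecidablePred p] (x : ι → R) :
    ∑ i, x i * ((A i).filter p).card = ∑ e ∈ E.filter p, ∑ i, x i * if e ∈ A i then 1 else 0 := by
  have hcard : ∀ i, (((A i).filter p).card : R) = ∑ e ∈ E.filter p, if e ∈ A i then 1 else 0 := by
    intro i
    rw [sum_boole, filter_filter]
    congr 2
    ext e
    simp only [mem_filter]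
    exact ⟨fun ⟨hA, hp⟩ => ⟨hAE i hA, hp, hA⟩, fun ⟨_, hp, hA⟩ => ⟨hA, hp⟩⟩
  simp_rw [hcard, mul_sum]
  exact sum_comm

/-- Let `x` be a probability distribution over the
`s`-arborescences `A_1,…,A_N` of a weighted digraph `G = (V, E, w)` with
positive weights, with maximum load `γ = max_j ∑_i x_i·1[j ∈ A_i]/w(j)` over
edges `j ∈ E`.  If `S` is a cut with `s` on the source side and weight `δ(S)`,
then the expected number of edges of a random arborescence (drawn with
probabilities `x_i`) crossing the cut `(S, V\S)` is at most `γ·δ(S)`, and is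
always at least `1` (since every `s`-arborescence crosses the cut). -/
theorem expected_crossings_of_random_arborescence
    {V : Type*} [Fintype V] [DecidableEq V]
    (E : Finset (V × V)) (w : V × V → ℝ) (hw : ∀ e ∈ E, 0 < w e)
    (s : V) (N : ℕ) (A : Fin N → Finset (V × V))
    (hAE : ∀ i : Fin N, A i ⊆ E)
    (harb : ∀ i : Fin N, ∃ parent : V → V,
      (∀ v : V, v ≠ s → (parent v, v) ∈ A i) ∧
      (∀ v : V, ∃ k : ℕ, parent^[k] v = s))
    (x : Fin N → ℝ) (hx : ∀ i, 0 ≤ x i) (hx1 : ∑ i : Fin N, x i = 1)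
    (γ : ℝ)
    (hload : ∀ e ∈ E, (∑ i : Fin N, x i * (if e ∈ A i then 1 else 0)) / w e ≤ γ)
    (S : Finset V) (hsS : s ∈ S) (hS : S ≠ Finset.univ) :
    (1 : ℝ) ≤ ∑ i : Fin N,
        x i * (((A i).filter (fun e => e.1 ∈ S ∧ e.2 ∉ S)).card : ℝ)
    ∧ ∑ i : Fin N,
        x i * (((A i).filter (fun e => e.1 ∈ S ∧ e.2 ∉ S)).card : ℝ)
      ≤ γ * ∑ e ∈ E.filter (fun e => e.1 ∈ S ∧ e.2 ∉ S), w e := by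
  obtain ⟨v, hv⟩ : ∃ v, v ∉ S := by simpa [eq_univ_iff_forall] using hS
  refine ⟨?_, ?_⟩
  · have hcross : ∀ i, (1 : ℝ) ≤ ((A i).filter fun e => e.1 ∈ S ∧ e.2 ∉ S).card := fun i => by
      obtain ⟨parent, hpar, hroot⟩ := harb i
      exact_mod_cast (filter_crossing_nonempty_of_parent hpar hsS hv (hroot v)).card_pos
    calc (1 : ℝ) = ∑ i, x i * 1 := by simp [hx1]
      _ ≤ _ := sum_le_sum fun i _ => mul_le_mul_of_nonneg_left (hcross i) (hx i)
  · rw [sum_mul_card_filter_eq_sum_filter_sum E A hAE, mul_sum]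
    refine sum_le_sum fun e he => ?_
    have heE := (mem_filter.1 he).1
    exact (div_le_iff₀ (hw e heE)).1 (hload e heE)
end
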